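/- arXiv:1912.12541 — 2 statements merged into one kernel-verified Lean document; each statement's English description precedes it below -/
import Mathlib

section
/- For an additive valuation v on a finite set G of m items, with items of G ranked in decreasing order of value by agent i, and any n ≥ 1 with 2n < m: the value of the item ranked tn (for t ≥ 2) is at least 1/n times the total value of the items ranked tn through (t+1)n − 1. Consequently, summing over t from 2 to ⌊m/n⌋ − 1, the sum of values of the items ranked 2n, 3n, 4n, ... is at least (1/n) times the total value of items ranked 2n+1 through m. -/
theorem stmt_4 (v : ℕ → ℝ) (hnn : ∀ j, 0 ≤ v j)
    (hdec : ∀ a b : ℕ, a ≤ b → v b ≤ v a)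
    (n m : ℕ) (hn : 1 ≤ n) (hm : 2 * n < m) :
    ∑ t ∈ Finset.Icc 2 (m / n), v (t * n) ≥
      (1 / (n : ℝ)) * ∑ j ∈ Finset.Icc (2 * n + 1) m, v j := by
  have hn0 : (0:ℝ) < n := by exact_mod_cast hn
  rw [ge_iff_le, one_div, inv_mul_le_iff₀ hn0]
  calc ∑ j ∈ Finset.Icc (2 * n + 1) m, v j
      ≤ ∑ j ∈ Finset.Icc (2 * n + 1) m, v ((j / n) * n) := by
        apply Finset.sum_le_sum
        intro j _
        exact hdec _ _ (Nat.div_mul_le_self j n)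
    _ = ∑ t ∈ (Finset.Icc (2 * n + 1) m).image (· / n),
          (((Finset.Icc (2 * n + 1) m).filter (fun j => j / n = t)).card) • v (t * n) :=
        Finset.sum_comp (fun t => v (t * n)) (· / n)
    _ ≤ ∑ t ∈ (Finset.Icc (2 * n + 1) m).image (· / n), (n:ℝ) * v (t * n) := by
        apply Finset.sum_le_sum
        intro t _
        rw [nsmul_eq_mul]
        apply mul_le_mul_of_nonneg_right _ (hnn _)
        have hcard : ((Finset.Icc (2 * n + 1) m).filter (fun j => j / n = t)).card ≤ n := by
          have hsub : {j ∈ Finset.Icc (2 * n + 1) m | j / n = t} ⊆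
              Finset.Icc (t * n) (t * n + (n - 1)) := by
            intro j hj
            simp only [Finset.mem_filter, Finset.mem_Icc] at hj ⊢
            obtain ⟨_, hjt⟩ := hj
            subst hjt
            constructor
            · exact Nat.div_mul_le_self j n
            · have h1 := Nat.div_add_mod j n
              have h2 := Nat.mod_lt j (show 0 < n from hn)
              have h3 : n * (j / n) = (j / n) * n := Nat.mul_comm _ _
              omega
          calc ((Finset.Icc (2 * n + 1) m).filter (fun j => j / n = t)).card
              ≤ (Finset.Icc (t * n) (t * n + (n - 1))).card := Finset.card_le_card hsub
            _ = n := by rw [Nat.card_Icc]; omega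
        exact_mod_cast hcard
    _ ≤ ∑ t ∈ Finset.Icc 2 (m / n), (n:ℝ) * v (t * n) := by
        apply Finset.sum_le_sum_of_subset_of_nonneg
        · intro t ht
          simp only [Finset.mem_image, Finset.mem_Icc] at ht ⊢
          obtain ⟨j, ⟨hj1, hj2⟩, hjt⟩ := ht
          subst hjt
          constructor
          · have : 2 * n + 1 ≤ j := hj1
            calc 2 = (2 * n) / n := by rw [Nat.mul_div_cancel _ hn]
              _ ≤ j / n := Nat.div_le_div_right (by omega)
          · exact Nat.div_le_div_right hj2
        · intro t _ _
          exact mul_nonneg hn0.le (hnn _)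
    _ = n * ∑ t ∈ Finset.Icc 2 (m / n), v (t * n) := by rw [Finset.mul_sum]
end

section
/- In any allocation produced by a greedy repeated-matching procedure where in each round each agent receives an item she values at least as much as any item allocated to any agent in any later round, the allocation satisfies strong EF1: for every agent i', removing the item i' received in the first round, no agent i envies the remaining bundle of i' under additive valuations. -/
theorem stmt_12 {Agent Item : Type*} (v : Agent → Item → ℝ)
    (hv : ∀ i j, 0 ≤ v i j) (τ : Agent → ℕ) (alloc : Agent → ℕ → Item)
    (hcons : ∀ i i', τ i' ≤ τ i + 1)
    (hgreedy : ∀ i i' t k, t < τ i → k < τ i' → t < k →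
      v i (alloc i t) ≥ v i (alloc i' k)) :
    ∀ i i', ∑ t ∈ Finset.range (τ i), v i (alloc i t) ≥
      ∑ t ∈ Finset.Ico 1 (τ i'), v i (alloc i' t) := by
  intro i i'
  rw [Finset.sum_Ico_eq_sum_range]
  calc ∑ t ∈ Finset.range (τ i' - 1), v i (alloc i' (1 + t))
      ≤ ∑ t ∈ Finset.range (τ i' - 1), v i (alloc i t) := by
        apply Finset.sum_le_sum
        intro t ht
        simp only [Finset.mem_range] at ht
        have h1 : 1 + t < τ i' := by omega
        have h2 : t < τ i := by have := hcons i i'; omega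
        exact hgreedy i i' t (1 + t) h2 h1 (by omega)
    _ ≤ ∑ t ∈ Finset.range (τ i), v i (alloc i t) := by
        apply Finset.sum_le_sum_of_subset_of_nonneg
        · apply Finset.range_subset_range.mpr; have := hcons i i'; omega
        · intro t _ _; exact hv i _
end
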